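/- In any finite weighted graph on n vertices, the set of st-MinCut values {c_{st} : s, t ∈ V, s ≠ t} has cardinality at most n − 1. -/
import Mathlib


open Finset

noncomputable def cutW {V : Type*} [Fintype V] [DecidableEq V] (w : V → V → ℝ) (S : Finset V) : ℝ :=
  ∑ i ∈ S, ∑ j ∈ Sᶜ, w i j

noncomputable def minCutVal {V : Type*} [Fintype V] [DecidableEq V] (w : V → V → ℝ) (s t : V) : ℝ :=
  sInf {c : ℝ | ∃ S : Finset V, s ∈ S ∧ t ∉ S ∧ cutW w S = c}

noncomputable def cW {V : Type*} (w : V → V → ℝ) (A B : Finset V) : ℝ :=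
  ∑ i ∈ A, ∑ j ∈ B, w i j

noncomputable def volW {V : Type*} [Fintype V] (w : V → V → ℝ) (S : Finset V) : ℝ :=
  ∑ i ∈ S, ∑ j, w i j

section Aux

variable {V : Type*} [Fintype V] [DecidableEq V]

lemma cutSet_finite (w : V → V → ℝ) (s t : V) :
    {c : ℝ | ∃ S : Finset V, s ∈ S ∧ t ∉ S ∧ cutW w S = c}.Finite := by
  apply (Set.finite_range (cutW w)).subset
  rintro c ⟨S, _, _, h⟩
  exact ⟨S, h⟩

lemma minCut_exists (w : V → V → ℝ) {s t : V} (hst : s ≠ t) :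
    ∃ S : Finset V, s ∈ S ∧ t ∉ S ∧ cutW w S = minCutVal w s t := by
  have hne : {c : ℝ | ∃ S : Finset V, s ∈ S ∧ t ∉ S ∧ cutW w S = c}.Nonempty :=
    ⟨cutW w {s}, {s}, Finset.mem_singleton_self s, by simp [Ne.symm hst], rfl⟩
  exact hne.csInf_mem (cutSet_finite w s t)

lemma minCut_le (w : V → V → ℝ) {s t : V} {S : Finset V} (hs : s ∈ S) (ht : t ∉ S) :
    minCutVal w s t ≤ cutW w S :=
  csInf_le (cutSet_finite w s t).bddBelow ⟨S, hs, ht, rfl⟩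

lemma cutW_compl (w : V → V → ℝ) (hsymm : ∀ i j, w i j = w j i) (S : Finset V) :
    cutW w Sᶜ = cutW w S := by
  unfold cutW
  rw [compl_compl, Finset.sum_comm]
  exact Finset.sum_congr rfl fun i _ => Finset.sum_congr rfl fun j _ => hsymm j i

lemma minCut_symm (w : V → V → ℝ) (hsymm : ∀ i j, w i j = w j i) (s t : V) :
    minCutVal w s t = minCutVal w t s := by
  have key : ∀ a b : V, minCutVal w a b ≤ minCutVal w b a := by
    intro a b
    by_cases hab : a = b
    · subst hab; rfl
    · obtain ⟨S, hb, ha, hS⟩ := minCut_exists w (Ne.symm hab)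
      have h1 : minCutVal w a b ≤ cutW w Sᶜ :=
        minCut_le w (Finset.mem_compl.mpr ha) (by simp [hb])
      rw [cutW_compl w hsymm] at h1
      linarith [hS]
  exact le_antisymm (key s t) (key t s)

lemma minCut_ultra (w : V → V → ℝ) {s t : V} (v : V) (hst : s ≠ t) :
    min (minCutVal w s v) (minCutVal w v t) ≤ minCutVal w s t := by
  obtain ⟨S, hs, ht, hS⟩ := minCut_exists w hst
  by_cases hv : v ∈ S
  · have := minCut_le w hv ht
    calc min (minCutVal w s v) (minCutVal w v t) ≤ minCutVal w v t := min_le_right _ _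
      _ ≤ cutW w S := this
      _ = minCutVal w s t := hS
  · have := minCut_le w hs hv
    calc min (minCutVal w s v) (minCutVal w v t) ≤ minCutVal w s v := min_le_left _ _
      _ ≤ cutW w S := this
      _ = minCutVal w s t := hS

/-- Abstract lemma: a symmetric function satisfying the ultrametric-type inequality
takes at most `n - 1` distinct values on off-diagonal pairs of an `n`-element set. -/
lemma ultra_card {W : Type*} [DecidableEq W] (c : W → W → ℝ)
    (hsym : ∀ a b, c a b = c b a)
    (hult : ∀ a b v, a ≠ b → min (c a v) (c v b) ≤ c a b) :
    ∀ n : ℕ, ∀ s : Finset W, s.card = n →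
      ((((s ×ˢ s).filter fun p => p.1 ≠ p.2)).image fun p => c p.1 p.2).card ≤ s.card - 1 := by
  intro n
  induction n using Nat.strong_induction_on with
  | _ n IH =>
    intro s hs
    set P := ((s ×ˢ s).filter fun p => p.1 ≠ p.2) with hP
    by_cases hPe : P = ∅
    · rw [hPe]; simp
    · obtain ⟨p, hp, hmax⟩ := Finset.exists_max_image P (fun p => c p.1 p.2)
        (Finset.nonempty_of_ne_empty hPe)
      obtain ⟨a, b⟩ := p
      rw [hP, Finset.mem_filter, Finset.mem_product] at hp
      obtain ⟨⟨ha, hb⟩, hab⟩ := hp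
      simp only at ha hb hab
      -- maximality helper
      have hmax' : ∀ x y : W, x ∈ s → y ∈ s → x ≠ y → c x y ≤ c a b := by
        intro x y hx hy hxy
        exact hmax (x, y) (by rw [hP, Finset.mem_filter, Finset.mem_product]; exact ⟨⟨hx, hy⟩, hxy⟩)
      -- claim: for u distinct from a, b we have c a u = c b u
      have hclaim : ∀ u ∈ s, u ≠ a → u ≠ b → c a u = c b u := by
        intro u hu hua hub
        have h1 : c b u ≤ c a u := by
          have hu1 := hult a u b (Ne.symm hua)
          have hle : c b u ≤ c a b := hmax' b u hb hu (Ne.symm hub)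
          rw [min_eq_right hle] at hu1
          exact hu1
        have h2 : c a u ≤ c b u := by
          have hu2 := hult b u a (Ne.symm hub)
          have hle : c a u ≤ c b a := by rw [hsym b a]; exact hmax' a u ha hu (Ne.symm hua)
          rw [min_eq_right hle] at hu2
          exact hu2
        linarith
      have h2card : 2 ≤ s.card := Finset.one_lt_card.mpr ⟨a, ha, b, hb, hab⟩
      -- subset relation
      have hsub : (P.image fun p => c p.1 p.2) ⊆
          insert (c a b)
            (((((s.erase b) ×ˢ (s.erase b)).filter fun p => p.1 ≠ p.2)).image
              fun p => c p.1 p.2) := by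
        intro x hx
        rw [Finset.mem_image] at hx
        obtain ⟨⟨x₁, x₂⟩, hq, rfl⟩ := hx
        rw [hP, Finset.mem_filter, Finset.mem_product] at hq
        obtain ⟨⟨hx1, hx2⟩, hx12⟩ := hq
        simp only at hx1 hx2 hx12
        rw [Finset.mem_insert]
        have memRight : ∀ y z : W, y ∈ s → z ∈ s → y ≠ b → z ≠ b → y ≠ z →
            c y z ∈ ((((s.erase b) ×ˢ (s.erase b)).filter fun p => p.1 ≠ p.2)).image
              (fun p => c p.1 p.2) := by
          intro y z hy hz hyb hzb hyz
          rw [Finset.mem_image]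
          exact ⟨(y, z), by
            rw [Finset.mem_filter, Finset.mem_product]
            exact ⟨⟨Finset.mem_erase.mpr ⟨hyb, hy⟩, Finset.mem_erase.mpr ⟨hzb, hz⟩⟩, hyz⟩, rfl⟩
        by_cases hb1 : x₁ = b
        · subst hb1
          by_cases ha2 : x₂ = a
          · subst ha2; left; exact hsym _ _
          · right
            have : c x₁ x₂ = c a x₂ := (hclaim x₂ hx2 ha2 (Ne.symm hx12)).symm
            rw [this]
            exact memRight a x₂ ha hx2 hab ((ne_comm).mp hx12) (Ne.symm ha2)
        · by_cases hb2 : x₂ = b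
          · subst hb2
            by_cases ha1 : x₁ = a
            · subst ha1; left; rfl
            · right
              have : c x₁ x₂ = c a x₁ := by
                rw [hsym]
                exact (hclaim x₁ hx1 ha1 hb1).symm
              rw [this]
              exact memRight a x₁ ha hx1 hab hb1 (Ne.symm ha1)
          · right
            exact memRight x₁ x₂ hx1 hx2 hb1 hb2 hx12
      -- apply IH to s.erase b
      have hbcard : (s.erase b).card = n - 1 := by
        rw [Finset.card_erase_of_mem hb, hs]
      have hIH := IH (n - 1) (by omega) (s.erase b) hbcard
      rw [hbcard] at hIH
      calc (P.image fun p => c p.1 p.2).card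
          ≤ (insert (c a b)
            (((((s.erase b) ×ˢ (s.erase b)).filter fun p => p.1 ≠ p.2)).image
              fun p => c p.1 p.2)).card := Finset.card_le_card hsub
        _ ≤ (((((s.erase b) ×ˢ (s.erase b)).filter fun p => p.1 ≠ p.2)).image
              fun p => c p.1 p.2).card + 1 := Finset.card_insert_le _ _
        _ ≤ (n - 1 - 1) + 1 := by omega
        _ ≤ s.card - 1 := by omega

end Aux

/-- there are at most n - 1 distinct st-MinCut values. -/
theorem stmt10 {V : Type*} [Fintype V] [DecidableEq V] (w : V → V → ℝ)
    (hnn : ∀ i j, 0 ≤ w i j) (hsymm : ∀ i j, w i j = w j i)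
    (h2 : 2 ≤ Fintype.card V) :
    Set.ncard {c : ℝ | ∃ s t : V, s ≠ t ∧ minCutVal w s t = c} ≤ Fintype.card V - 1 := by
  have hset : {c : ℝ | ∃ s t : V, s ≠ t ∧ minCutVal w s t = c} =
      ↑(((((univ : Finset V) ×ˢ univ).filter fun p => p.1 ≠ p.2)).image
        fun p => minCutVal w p.1 p.2) := by
    ext x
    simp only [Set.mem_setOf_eq, Finset.coe_image, Set.mem_image, Finset.mem_coe,
      Finset.mem_filter, Finset.mem_product, Finset.mem_univ, true_and]
    constructor
    · rintro ⟨s, t, hst, h⟩; exact ⟨(s, t), hst, h⟩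
    · rintro ⟨⟨s, t⟩, hst, h⟩; exact ⟨s, t, hst, h⟩
  rw [hset, Set.ncard_coe_finset]
  have := ultra_card (minCutVal w) (minCut_symm w hsymm)
    (fun a b v hab => minCut_ultra w v hab) (Fintype.card V) univ (by simp)
  simpa using this
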